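/- Under the assumptions of the previous statement applied componentwise, if the D-dimensional transition densities are products of independent univariate Gaussians with componentwise random means that are independent across components and tasks, then the expected importance weight factorizes: E[∏_{d=1}^D w_d] = ∏_{d=1}^D E[w_d], and each E[w_d] = (δ_{j,d}²/(δ_{j,d}² − σ_{GP_{j,d}}²)) · N(s'_d | μ_{GP_{0,d}}, δ_{0,d}² + σ_{GP_{0,d}}²) / N(s'_d | μ_{GP_{j,d}}, δ_{j,d}² − σ_{GP_{j,d}}²), provided σ_{GP_{j,d}}² < δ_{j,d}² for all d. -/

import Mathlib

/-!
Since the integrand is a product of functions of single coordinates, Fubini on the product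
measure splits the expectation into one-dimensional factors. In one dimension the product of
two Gaussian densities in `x` is the constant `N(m₁ | m₂, v₁ + v₂)` times a Gaussian density
in `x`, and for `v₂ < v₁` the quotient `N(x | m₂, v₂) / N(x | m₁, v₁)` is likewise a constant
times a Gaussian density of variance `v₁ v₂ / (v₁ - v₂)`; integrating these densities to `1`
leaves the constants.
-/

open MeasureTheory Real

/-- One-dimensional Gaussian density `N(x | μ, σ²)`. -/
noncomputable def gauss (μ σ2 x : ℝ) : ℝ :=
  (Real.sqrt (2 * Real.pi * σ2))⁻¹ * Real.exp (-(x - μ)^2 / (2 * σ2))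

lemma gauss_comm (μ v x : ℝ) : gauss μ v x = gauss x v μ := by
  rw [gauss, gauss, ← neg_sq, neg_sub]

lemma integral_gauss (μ : ℝ) {v : ℝ} (hv : 0 < v) : ∫ x, gauss μ v x = 1 := by
  have hpdf : gauss μ v = ProbabilityTheory.gaussianPDFReal μ v.toNNReal := by
    ext x
    rw [gauss, ProbabilityTheory.gaussianPDFReal, Real.coe_toNNReal _ hv.le]
  rw [hpdf, ProbabilityTheory.integral_gaussianPDFReal_eq_one]
  simpa using hv

lemma gauss_mul_gauss {v₁ v₂ : ℝ} (h₁ : 0 < v₁) (h₂ : 0 < v₂) (m₁ m₂ x : ℝ) :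
    gauss m₁ v₁ x * gauss m₂ v₂ x =
      gauss m₁ (v₁ + v₂) m₂ * gauss ((m₁ * v₂ + m₂ * v₁) / (v₁ + v₂)) (v₁ * v₂ / (v₁ + v₂)) x := by
  have hsqrt : (√(2 * π * v₁))⁻¹ * (√(2 * π * v₂))⁻¹ =
      (√(2 * π * (v₁ + v₂)))⁻¹ * (√(2 * π * (v₁ * v₂ / (v₁ + v₂))))⁻¹ := by
    rw [← mul_inv, ← mul_inv, ← sqrt_mul (by positivity), ← sqrt_mul (by positivity)]
    congr 2
    field_simp
  have hexp : exp (-(x - m₁) ^ 2 / (2 * v₁)) * exp (-(x - m₂) ^ 2 / (2 * v₂)) =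
      exp (-(m₂ - m₁) ^ 2 / (2 * (v₁ + v₂))) *
        exp (-(x - (m₁ * v₂ + m₂ * v₁) / (v₁ + v₂)) ^ 2 / (2 * (v₁ * v₂ / (v₁ + v₂)))) := by
    rw [← exp_add, ← exp_add]
    congr 1
    field_simp
    ring
  simp only [gauss]
  linear_combination (exp (-(x - m₁) ^ 2 / (2 * v₁)) * exp (-(x - m₂) ^ 2 / (2 * v₂))) * hsqrt
    + ((√(2 * π * (v₁ + v₂)))⁻¹ * (√(2 * π * (v₁ * v₂ / (v₁ + v₂))))⁻¹) * hexp

lemma gauss_div_gauss {v₁ v₂ : ℝ} (h₂ : 0 < v₂) (hlt : v₂ < v₁) (m₁ m₂ x : ℝ) :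
    gauss m₂ v₂ x / gauss m₁ v₁ x =
      v₁ / (v₁ - v₂) / gauss m₁ (v₁ - v₂) m₂ *
        gauss ((m₂ * v₁ - m₁ * v₂) / (v₁ - v₂)) (v₁ * v₂ / (v₁ - v₂)) x := by
  have h₁ : 0 < v₁ := h₂.trans hlt
  have hd : 0 < v₁ - v₂ := sub_pos.2 hlt
  have hsqrt : (√(2 * π * v₂))⁻¹ * √(2 * π * v₁) =
      v₁ / (v₁ - v₂) * √(2 * π * (v₁ - v₂)) * (√(2 * π * (v₁ * v₂ / (v₁ - v₂))))⁻¹ := by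
    rw [← sqrt_sq (div_pos h₁ hd).le, ← sqrt_inv, ← sqrt_inv, ← sqrt_mul (by positivity),
      ← sqrt_mul (by positivity), ← sqrt_mul (by positivity)]
    congr 1
    field_simp
  have hexp : exp (-(x - m₂) ^ 2 / (2 * v₂)) * (exp (-(x - m₁) ^ 2 / (2 * v₁)))⁻¹ =
      (exp (-(m₂ - m₁) ^ 2 / (2 * (v₁ - v₂))))⁻¹ *
        exp (-(x - (m₂ * v₁ - m₁ * v₂) / (v₁ - v₂)) ^ 2 / (2 * (v₁ * v₂ / (v₁ - v₂)))) := by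
    rw [← exp_neg, ← exp_neg, ← exp_add, ← exp_add]
    congr 1
    field_simp
    ring
  simp only [gauss, div_mul_eq_mul_div, div_div_eq_mul_div, ← div_eq_inv_mul]
  linear_combination (exp (-(x - m₂) ^ 2 / (2 * v₂)) * (exp (-(x - m₁) ^ 2 / (2 * v₁)))⁻¹) * hsqrt
    + (v₁ / (v₁ - v₂) * √(2 * π * (v₁ - v₂)) * (√(2 * π * (v₁ * v₂ / (v₁ - v₂))))⁻¹) * hexp

lemma integral_gauss_mul_gauss {v₁ v₂ : ℝ} (h₁ : 0 < v₁) (h₂ : 0 < v₂) (m₁ m₂ : ℝ) :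
    ∫ x, gauss m₁ v₁ x * gauss m₂ v₂ x = gauss m₁ (v₁ + v₂) m₂ := by
  simp_rw [gauss_mul_gauss h₁ h₂, integral_const_mul,
    integral_gauss _ (div_pos (mul_pos h₁ h₂) (add_pos h₁ h₂)), mul_one]

lemma integral_gauss_div_gauss {v₁ v₂ : ℝ} (h₂ : 0 < v₂) (hlt : v₂ < v₁) (m₁ m₂ : ℝ) :
    ∫ x, gauss m₂ v₂ x / gauss m₁ v₁ x = v₁ / (v₁ - v₂) / gauss m₁ (v₁ - v₂) m₂ := by
  simp_rw [gauss_div_gauss h₂ hlt, integral_const_mul,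
    integral_gauss _ (div_pos (mul_pos (h₂.trans hlt) h₂) (sub_pos.2 hlt)), mul_one]

section Fubini

variable {𝕜 α β : Type*} [RCLike 𝕜] [MeasurableSpace α] [MeasurableSpace β]

lemma integral_integral_mul (f : α → 𝕜) (g : β → 𝕜) (μ : Measure α) (ν : Measure β) :
    ∫ x, ∫ y, f x * g y ∂ν ∂μ = (∫ x, f x ∂μ) * ∫ y, g y ∂ν := by
  simp_rw [integral_const_mul, integral_mul_const]

lemma integral_integral_prod_mul_prod {ι γ : Type*} [Fintype ι] [MeasureSpace γ]
    [SigmaFinite (volume : Measure γ)] (f g : ι → γ → 𝕜) :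
    ∫ p : ι → γ, ∫ q : ι → γ, (∏ i, f i (p i)) * ∏ i, g i (q i) =
      ∏ i, ∫ x, ∫ y, f i x * g i y := by
  simp_rw [integral_integral_mul, integral_fintype_prod_volume_eq_prod, Finset.prod_mul_distrib]

end Fubini

theorem expected_transition_weight_gaussian_general
    (D : ℕ) (δ0 δj σGP0 σGPj μGP0 μGPj s' : Fin D → ℝ)
    (h0 : ∀ d, 0 < δ0 d)
    (hGP0 : ∀ d, 0 < σGP0 d) (hGPj : ∀ d, 0 < σGPj d)
    (hlt : ∀ d, σGPj d < δj d) :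
    (∫ p0 : Fin D → ℝ, ∫ pj : Fin D → ℝ,
        (∏ d, gauss (p0 d) (δ0 d) (s' d) / gauss (pj d) (δj d) (s' d)) *
          (∏ d, gauss (μGP0 d) (σGP0 d) (p0 d)) * (∏ d, gauss (μGPj d) (σGPj d) (pj d))) =
      ∏ d, (∫ x : ℝ, ∫ y : ℝ,
        (gauss x (δ0 d) (s' d) / gauss y (δj d) (s' d)) *
          gauss (μGP0 d) (σGP0 d) x * gauss (μGPj d) (σGPj d) y) ∧
    ∀ d, (∫ x : ℝ, ∫ y : ℝ,
        (gauss x (δ0 d) (s' d) / gauss y (δj d) (s' d)) *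
          gauss (μGP0 d) (σGP0 d) x * gauss (μGPj d) (σGPj d) y) =
      (δj d / (δj d - σGPj d)) *
        (gauss (μGP0 d) (δ0 d + σGP0 d) (s' d) / gauss (μGPj d) (δj d - σGPj d) (s' d)) := by
  have regroup : ∀ a b c e : ℝ, a / b * c * e = (a * c) * (e / b) := fun _ _ _ _ ↦ by ring
  -- read `N(s' | x, δ)` as a density in the mean `x`
  simp_rw [Finset.prod_div_distrib, regroup, ← Finset.prod_mul_distrib, ← Finset.prod_div_distrib,
    gauss_comm _ _ (s' _)]
  refine ⟨?_, fun d ↦ ?_⟩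
  · exact integral_integral_prod_mul_prod
      (fun d x ↦ gauss (s' d) (δ0 d) x * gauss (μGP0 d) (σGP0 d) x)
      (fun d y ↦ gauss (μGPj d) (σGPj d) y / gauss (s' d) (δj d) y)
  rw [integral_integral_mul, integral_gauss_mul_gauss (h0 d) (hGP0 d),
    integral_gauss_div_gauss (hGPj d) (hlt d)]
  ring

/-- Transition weights in Gaussian models with diagonal covariance: if the `D`-dimensional
transition densities are products of independent univariate Gaussians with componentwise
independent Gaussian-distributed means, then the expected importance weight factorizes as
a product over components, each given by the closed form
`(δ_{j,d}²/(δ_{j,d}² − σ_{GP_{j,d}}²)) · N(s'_d | μ_{GP_{0,d}}, δ_{0,d}² + σ_{GP_{0,d}}²)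
  / N(s'_d | μ_{GP_{j,d}}, δ_{j,d}² − σ_{GP_{j,d}}²)`. -/
theorem expected_transition_weight_gaussian
    (D : ℕ) (δ0 δj σGP0 σGPj μGP0 μGPj s' : Fin D → ℝ)
    (h0 : ∀ d, 0 < δ0 d) (hj : ∀ d, 0 < δj d)
    (hGP0 : ∀ d, 0 < σGP0 d) (hGPj : ∀ d, 0 < σGPj d)
    (hlt : ∀ d, σGPj d < δj d) :
    (∫ p0 : Fin D → ℝ, ∫ pj : Fin D → ℝ,
        (∏ d, gauss (p0 d) (δ0 d) (s' d) / gauss (pj d) (δj d) (s' d)) *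
          (∏ d, gauss (μGP0 d) (σGP0 d) (p0 d)) * (∏ d, gauss (μGPj d) (σGPj d) (pj d))) =
      ∏ d, (∫ x : ℝ, ∫ y : ℝ,
        (gauss x (δ0 d) (s' d) / gauss y (δj d) (s' d)) *
          gauss (μGP0 d) (σGP0 d) x * gauss (μGPj d) (σGPj d) y) ∧
    ∀ d, (∫ x : ℝ, ∫ y : ℝ,
        (gauss x (δ0 d) (s' d) / gauss y (δj d) (s' d)) *
          gauss (μGP0 d) (σGP0 d) x * gauss (μGPj d) (σGPj d) y) =
      (δj d / (δj d - σGPj d)) *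
        (gauss (μGP0 d) (δ0 d + σGP0 d) (s' d) / gauss (μGPj d) (δj d - σGPj d) (s' d)) :=
  expected_transition_weight_gaussian_general D δ0 δj σGP0 σGPj μGP0 μGPj s' h0 hGP0 hGPj hlt
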